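/- arXiv:2506.22268 — 9 statements merged into one kernel-verified Lean document; each statement's English description precedes it below -/
import Mathlib

section
/- Let G be a group and x, y elements of G of finite orders n = o(x) and m = o(y). Then there exist conjugates of g = xy in G, specifically at most lcm(n,m) of them, whose product is the identity; i.e. the generalized order e(xy) satisfies e(xy) ≤ lcm(o(x), o(y)). -/
/-- The generalized order of `g`: the smallest positive `k` such that some product of
`k` conjugates of `g` equals the identity. -/
noncomputable def genOrder {G : Type*} [Group G] (g : G) : ℕ :=
  sInf {k | 0 < k ∧ ∃ l : List G, l.length = k ∧ (l.map fun x => x⁻¹ * g * x).prod = 1}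

section GenOrder

variable {G : Type*} [Group G]

theorem genOrder_le {g : G} {k : ℕ} (hk : 0 < k) (l : List G) (hl : l.length = k)
    (hprod : (l.map fun x => x⁻¹ * g * x).prod = 1) : genOrder g ≤ k :=
  Nat.sInf_le ⟨hk, l, hl, hprod⟩

theorem prod_map_range_conj_pow_mul (x y : G) (k : ℕ) :
    ((List.range k).map fun i => (y ^ i)⁻¹ * (x * y) * y ^ i).prod = x ^ k * y ^ k := by
  induction k with
  | zero => simp
  | succ k ih =>
    rw [List.range_succ, List.map_append, List.prod_append, ih]
    simp only [List.map_cons, List.map_nil, List.prod_cons, List.prod_nil, mul_one, pow_succ]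
    group

theorem genOrder_mul_le_of_pow_eq_one {x y : G} {k : ℕ} (hk : 0 < k)
    (hxk : x ^ k = 1) (hyk : y ^ k = 1) : genOrder (x * y) ≤ k := by
  refine genOrder_le hk ((List.range k).map (y ^ ·)) (by simp) ?_
  rw [List.map_map]
  exact (prod_map_range_conj_pow_mul x y k).trans (by rw [hxk, hyk, one_mul])

end GenOrder

theorem stmt0 {G : Type*} [Group G] (x y : G)
    (hx : IsOfFinOrder x) (hy : IsOfFinOrder y) :
    genOrder (x * y) ≤ Nat.lcm (orderOf x) (orderOf y) :=
  genOrder_mul_le_of_pow_eq_one (Nat.lcm_pos hx.orderOf_pos hy.orderOf_pos)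
    (orderOf_dvd_iff_pow_eq_one.mp (Nat.dvd_lcm_left _ _))
    (orderOf_dvd_iff_pow_eq_one.mp (Nat.dvd_lcm_right _ _))
end

section
/- Let G be a group and x, y ∈ G with o(x) = 2 and y conjugate to y⁻¹ in G (i.e. y^a = y⁻¹ for some a ∈ G). Then the generalized order of xy satisfies e(xy) ≤ 4. -/
section

variable {G : Type*} [Group G]

theorem genOrder_le_length {g : G} {l : List G} (hl : l ≠ [])
    (h : (l.map fun x => x⁻¹ * g * x).prod = 1) : genOrder g ≤ l.length :=
  Nat.sInf_le ⟨List.length_pos_of_ne_nil hl, l, rfl, h⟩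

theorem mul_mul_conj_eq_sq {x : G} (hx : x ^ 2 = 1) (y : G) :
    x * y * (y⁻¹ * (x * y) * y) = y ^ 2 := by
  calc x * y * (y⁻¹ * (x * y) * y) = x ^ 2 * y ^ 2 := by rw [sq, sq]; group
    _ = y ^ 2 := by rw [hx, one_mul]

end

theorem stmt1 {G : Type*} [Group G] (x y : G)
    (hx : orderOf x = 2) (hy : ∃ a : G, a⁻¹ * y * a = y⁻¹) :
    genOrder (x * y) ≤ 4 := by
  obtain ⟨a, ha⟩ := hy
  have hsq := mul_mul_conj_eq_sq (hx ▸ pow_orderOf_eq_one x) y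
  have hprod : ([1, y, a, y * a].map fun c => c⁻¹ * (x * y) * c).prod = 1 := by
    calc ([1, y, a, y * a].map fun c => c⁻¹ * (x * y) * c).prod
        = x * y * (y⁻¹ * (x * y) * y) * (a⁻¹ * (x * y * (y⁻¹ * (x * y) * y)) * a) := by
          simp only [List.map_cons, List.map_nil, List.prod_cons, List.prod_nil]
          group
      _ = y ^ 2 * (a⁻¹ * y * a) ^ 2 := by rw [hsq, sq, sq]; group
      _ = 1 := by rw [ha, inv_pow, mul_inv_cancel]
  exact genOrder_le_length (List.cons_ne_nil _ _) hprod
end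

section
/- Let G be a finite group and x, y ∈ G with xy = yx. Let m be the generalized order of y in the centralizer C_G(x), and let n be the generalized order of x^m in G. Then the generalized order of xy in G satisfies e_G(xy) ≤ n·m. -/
section genOrder

variable {G : Type*} [Group G]

theorem genOrder_le_of_prod_eq_one {g : G} (l : List G) (hl : 0 < l.length)
    (hprod : (l.map fun a => a⁻¹ * g * a).prod = 1) : genOrder g ≤ l.length :=
  Nat.sInf_le ⟨hl, l, rfl, hprod⟩

theorem genOrder_spec [Finite G] (g : G) :
    0 < genOrder g ∧ ∃ l : List G, l.length = genOrder g ∧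
      (l.map fun a => a⁻¹ * g * a).prod = 1 := by
  refine Nat.sInf_mem (s := {k | 0 < k ∧ ∃ l : List G, l.length = k ∧
    (l.map fun a => a⁻¹ * g * a).prod = 1})
    ⟨orderOf g, orderOf_pos g, List.replicate (orderOf g) 1, by simp, ?_⟩
  simp [pow_orderOf_eq_one]

theorem list_prod_map_conj_mul_right (g d : G) (l : List G) :
    (l.map fun a => (a * d)⁻¹ * g * (a * d)).prod
      = d⁻¹ * (l.map fun a => a⁻¹ * g * a).prod * d := by
  have hconj : (fun a => (a * d)⁻¹ * g * (a * d)) = MulAut.conj d⁻¹ ∘ fun a => a⁻¹ * g * a := by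
    ext a
    simp [mul_assoc]
  rw [hconj, ← List.map_map, ← map_list_prod, MulAut.conj_apply, inv_inv]

theorem list_prod_map_mul_left_of_commute {ι M : Type*} [Monoid M] (z : M) (f : ι → M)
    (l : List ι) (h : ∀ i ∈ l, Commute z (f i)) :
    (l.map fun i => z * f i).prod = z ^ l.length * (l.map f).prod := by
  induction l with
  | nil => simp
  | cons i l ih =>
    rw [List.map_cons, List.prod_cons, ih fun j hj => h j (List.mem_cons_of_mem i hj),
      List.length_cons, List.map_cons, List.prod_cons, pow_succ', mul_assoc, mul_assoc,
      ← mul_assoc (f i), ← ((h i List.mem_cons_self).pow_left l.length).eq, mul_assoc]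

theorem list_prod_map_conj_mul_of_commute {z g : G} (l : List G) (hzg : Commute z g)
    (hl : ∀ a ∈ l, Commute z a) :
    (l.map fun a => a⁻¹ * (z * g) * a).prod
      = z ^ l.length * (l.map fun a => a⁻¹ * g * a).prod := by
  rw [← list_prod_map_mul_left_of_commute z _ l
    fun a ha => ((hl a ha).inv_right.mul_right hzg).mul_right (hl a ha)]
  refine congrArg List.prod (List.map_congr_left fun a ha => ?_)
  have hcomm := (hl a ha).inv_right.eq
  simp only [mul_assoc] at hcomm ⊢
  rw [← mul_assoc a⁻¹, ← hcomm, mul_assoc]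

theorem genOrder_le_genOrder_mul_length [Finite G] {g h : G} (l : List G) (hl : 0 < l.length)
    (hprod : (l.map fun a => a⁻¹ * g * a).prod = h) : genOrder g ≤ genOrder h * l.length := by
  obtain ⟨hpos, D, hD, hDprod⟩ := genOrder_spec h
  have hlen : (D.flatMap fun d => l.map (· * d)).length = genOrder h * l.length := by
    simp [List.length_flatMap, hD]
  refine hlen ▸ genOrder_le_of_prod_eq_one _ (hlen ▸ Nat.mul_pos hpos hl) ?_
  simp only [List.flatMap, List.map_flatten, List.prod_flatten, List.map_map, Function.comp_def,
    list_prod_map_conj_mul_right, hprod, hDprod]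

end genOrder

theorem stmt3 {G : Type*} [Group G] [Finite G] (x y : G)
    (hxy : x * y = y * x) (hy : y ∈ Subgroup.centralizer ({x} : Set G))
    (m n : ℕ)
    (hm : m = genOrder (⟨y, hy⟩ : Subgroup.centralizer ({x} : Set G)))
    (hn : n = genOrder (x ^ m)) :
    genOrder (x * y) ≤ n * m := by
  obtain ⟨hmpos, L, hLlen, hLprod⟩ := genOrder_spec (⟨y, hy⟩ : Subgroup.centralizer ({x} : Set G))
  rw [← hm] at hmpos hLlen
  have hyconj : ((L.map Subtype.val).map fun a => a⁻¹ * y * a).prod = 1 := by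
    simpa [List.map_map, Function.comp_def] using congrArg Subtype.val hLprod
  have hxyconj : ((L.map Subtype.val).map fun a => a⁻¹ * (x * y) * a).prod = x ^ m := by
    rw [list_prod_map_conj_mul_of_commute _ hxy fun a ha => ?_, hyconj, mul_one,
      List.length_map, hLlen]
    obtain ⟨c, -, rfl⟩ := List.mem_map.1 ha
    exact c.2 x rfl
  have hle := genOrder_le_genOrder_mul_length _ (by rwa [List.length_map, hLlen]) hxyconj
  rwa [List.length_map, hLlen, ← hn] at hle
end

section
/- Let G be a finite group and g ∈ G a semirational element of order n. Then e(g) ≤ j(n) + 2, where j(n) is the Jacobsthal function of n, i.e. the smallest positive integer m such that every sequence of m consecutive positive integers contains an integer coprime to n. -/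
/-- The Jacobsthal function: the smallest positive `m` such that every sequence of `m`
consecutive positive integers contains an integer coprime to `n`. -/
noncomputable def jacobsthal (n : ℕ) : ℕ :=
  sInf {m | 0 < m ∧ ∀ a : ℕ, ∃ i, i < m ∧ Nat.Coprime (a + 1 + i) n}

theorem exists_coprime_add_lt_jacobsthal {n : ℕ} (hn : 0 < n) (a : ℕ) :
    ∃ i, i < jacobsthal n ∧ Nat.Coprime (a + 1 + i) n := by
  -- Among `b + 1, …, b + n + 1` lies `n * (b / n + 1) + 1`, which is coprime to `n`.
  have hnonempty : {m | 0 < m ∧ ∀ a : ℕ, ∃ i, i < m ∧ Nat.Coprime (a + 1 + i) n}.Nonempty := by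
    refine ⟨n + 1, n.succ_pos, fun b => ⟨n * (b / n + 1) - b, ?_, ?_⟩⟩
    · have hle : n * (b / n + 1) ≤ b + n := by
        rw [mul_add_one]
        linarith [Nat.mul_div_le b n]
      omega
    · rw [show b + 1 + (n * (b / n + 1) - b) = n * (b / n + 1) + 1 by
        linarith [Nat.sub_add_cancel (Nat.lt_mul_div_succ b hn).le], Nat.coprime_mul_left_add_left]
      exact Nat.coprime_one_left n
  exact (Nat.sInf_mem hnonempty).2 a

section

variable {G : Type*} [Group G] {g : G}

theorem exists_prod_conj_eq_pow_sum {cs : List ℕ} (hconj : ∀ c ∈ cs, IsConj g (g ^ c)) :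
    ∃ l : List G, l.length = cs.length ∧ (l.map fun x => x⁻¹ * g * x).prod = g ^ cs.sum := by
  induction cs with
  | nil => exact ⟨[], rfl, by simp⟩
  | cons c cs ih =>
    obtain ⟨l, hlen, hprod⟩ := ih fun c' hc' => hconj c' (List.mem_cons_of_mem c hc')
    obtain ⟨y, hy⟩ := isConj_iff.mp (hconj c List.mem_cons_self)
    refine ⟨y⁻¹ :: l, by simp [hlen], ?_⟩
    rw [List.map_cons, List.prod_cons, hprod, inv_inv, hy, List.sum_cons, pow_add]

theorem genOrder_le_length_add {cs : List ℕ} (hcs : cs ≠ [])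
    (hconj : ∀ c ∈ cs, IsConj g (g ^ c)) {k : ℕ} (hsum : g ^ (cs.sum + k) = 1) :
    genOrder g ≤ cs.length + k := by
  obtain ⟨l, hlen, hprod⟩ := exists_prod_conj_eq_pow_sum hconj
  refine Nat.sInf_le ⟨by simp [List.length_pos_iff.mpr hcs], l ++ List.replicate k 1,
    by simp [hlen], ?_⟩
  simp [hprod, ← pow_add, hsum]

theorem IsConj.pow_orderOf_sub {q : ℕ} (h : IsConj g⁻¹ (g ^ q)) (hq : q ≤ orderOf g) :
    IsConj g (g ^ (orderOf g - q)) := by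
  obtain ⟨y, hy⟩ := isConj_iff.mp h
  refine isConj_iff.mpr ⟨y, ?_⟩
  rw [pow_sub g hq, pow_orderOf_eq_one, one_mul, ← hy, conj_inv, inv_inv]

theorem genOrder_le_jacobsthal_add_two_of_isConj_pow (hg : 0 < orderOf g)
    (hsemi : ∀ m : ℕ, Nat.Coprime m (orderOf g) → IsConj g (g ^ m) ∨ IsConj g⁻¹ (g ^ m))
    {c d : ℕ} (hcd : c + d = orderOf g) (hc : IsConj g (g ^ c)) :
    genOrder g ≤ jacobsthal (orderOf g) + 2 := by
  set J := jacobsthal (orderOf g)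
  induction d using Nat.strong_induction_on generalizing c with
  | _ d ih =>
    by_cases hd : d ≤ J + 1
    · calc genOrder g ≤ 1 + d :=
            genOrder_le_length_add (by simp) (List.forall_mem_singleton.2 hc)
              (by rw [List.sum_singleton, hcd, pow_orderOf_eq_one])
        _ ≤ J + 2 := by omega
    obtain ⟨i, hiJ, hcop⟩ := exists_coprime_add_lt_jacobsthal hg (d - J - 1)
    set q := d - J - 1 + 1 + i
    rcases hsemi q hcop with hq | hq
    · calc genOrder g ≤ 2 + (d - q) :=
            genOrder_le_length_add (by simp)
              (List.forall_mem_cons.2 ⟨hc, List.forall_mem_singleton.2 hq⟩)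
              (by rw [List.sum_pair, show c + q + (d - q) = orderOf g by omega, pow_orderOf_eq_one])
        _ ≤ J + 2 := by omega
    · exact ih q (by omega) (by omega) (hq.pow_orderOf_sub (by omega))

end

theorem stmt6 {G : Type*} [Group G] [Finite G] (g : G) (n : ℕ) (hn : orderOf g = n)
    (hsemi : ∀ m : ℕ, Nat.Coprime m n → IsConj g (g ^ m) ∨ IsConj g⁻¹ (g ^ m)) :
    genOrder g ≤ jacobsthal n + 2 := by
  subst hn
  have hg := orderOf_pos g
  exact genOrder_le_jacobsthal_add_two_of_isConj_pow hg hsemi (c := 1) (d := orderOf g - 1)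
    (by omega) (by rw [pow_one])
end

section
/- Let G be a finite group and g ∈ G a semirational element of order n. If n is an odd prime power, then e(g) ≤ 3. If n is a power of 2, then e(g) ≤ 4. -/
/-!
Let `S` be the set of integers `z` with `g` conjugate to `g ^ z`. Conjugates `g ^ z₁, …, g ^ zₖ`
with `zᵢ ∈ S` multiply to `1` as soon as `n ∣ z₁ + ⋯ + zₖ`, and semirationality says that every
`m` prime to `n` lies in `S` or in `-S`.

For `n = p ^ k` with `p` odd, suppose no three elements of `S` sum to `0` mod `n`. Then `S`
contains every `a + b` prime to `p` with `a, b ∈ S` (otherwise `a + b - (a + b) = 0`), so climbing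
from `1` and `2 = 1 + 1` by steps of `1` or `2` puts `n - 2` in `S`, and `1 + 1 + (n - 2) = n`.

For `n = 2 ^ k`, suppose no four elements of `S` sum to `0` mod `n`. If `2m + 1 ∈ S` then
`2m + 3 ∈ S`, since otherwise `(2m + 1) - (2m + 3) + 1 + 1 = 0`; hence `2n - 1 ∈ S`, and
`(2n - 1) + (2n - 1) + 1 + 1 = 4n`.
-/

section ExponentSums

variable {S : Set ℤ} {n : ℕ}

theorem natCast_add_mem_of_coprime
    (hS : ∀ m : ℕ, m.Coprime n → (m : ℤ) ∈ S ∨ -(m : ℤ) ∈ S)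
    (h3 : ∀ a ∈ S, ∀ b ∈ S, ∀ c ∈ S, ¬(n : ℤ) ∣ a + b + c)
    {a b : ℕ} (ha : (a : ℤ) ∈ S) (hb : (b : ℤ) ∈ S) (hab : (a + b).Coprime n) :
    ((a + b : ℕ) : ℤ) ∈ S :=
  (hS _ hab).resolve_right fun h => h3 _ ha _ hb _ h (by push_cast; simp)

theorem natCast_mem_of_not_dvd {p k : ℕ} (hp : p.Prime) (hodd : Odd p) (hn : n = p ^ k)
    (h1 : (1 : ℤ) ∈ S) (hS : ∀ m : ℕ, m.Coprime n → (m : ℤ) ∈ S ∨ -(m : ℤ) ∈ S)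
    (h3 : ∀ a ∈ S, ∀ b ∈ S, ∀ c ∈ S, ¬(n : ℤ) ∣ a + b + c) (x : ℕ) (hx : ¬p ∣ x) :
    (x : ℤ) ∈ S := by
  have coprime_of_not_dvd : ∀ y : ℕ, ¬p ∣ y → y.Coprime n := fun y hy =>
    hn ▸ ((hp.coprime_iff_not_dvd.2 hy).symm.pow_right k)
  have h2 : ((2 : ℕ) : ℤ) ∈ S := by
    refine natCast_add_mem_of_coprime (a := 1) (b := 1) hS h3 h1 h1 (coprime_of_not_dvd 2 fun h => ?_)
    rw [(Nat.prime_dvd_prime_iff_eq hp Nat.prime_two).1 h] at hodd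
    exact Nat.not_odd_iff_even.2 even_two hodd
  induction x using Nat.strong_induction_on with
  | _ x ih =>
    rcases x with _ | _ | x
    · exact absurd (dvd_zero p) hx
    · exact_mod_cast h1
    by_cases hd : p ∣ x + 1
    · have hx' : ¬p ∣ x := fun h => hp.one_lt.ne' (Nat.dvd_one.1 ((Nat.dvd_add_right h).1 hd))
      exact natCast_add_mem_of_coprime (a := x) hS h3 (ih x (by omega) hx') h2
        (coprime_of_not_dvd _ hx)
    · exact natCast_add_mem_of_coprime hS h3 (ih (x + 1) (by omega) hd) h1
        (coprime_of_not_dvd _ hx)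

theorem exists_add_add_dvd_of_eq_odd_prime_pow {p k : ℕ} (hp : p.Prime) (hodd : Odd p)
    (hn : n = p ^ k) (h1 : (1 : ℤ) ∈ S)
    (hS : ∀ m : ℕ, m.Coprime n → (m : ℤ) ∈ S ∨ -(m : ℤ) ∈ S) :
    ∃ a ∈ S, ∃ b ∈ S, ∃ c ∈ S, (n : ℤ) ∣ a + b + c := by
  by_contra! h3
  rcases k with _ | k
  · exact h3 1 h1 1 h1 1 h1 (by simp [hn])
  have hpn : p ∣ n := hn ▸ dvd_pow_self p k.succ_ne_zero
  have hp3 : 3 ≤ p := by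
    obtain ⟨t, rfl⟩ := hodd
    have := hp.two_le
    omega
  have hn2 : 2 ≤ n := by
    have := Nat.le_of_dvd (hn ▸ pow_pos hp.pos _) hpn
    omega
  have hn2' : ¬p ∣ n - 2 := fun h => by
    have := Nat.le_of_dvd two_pos (by simpa [Nat.sub_sub_self hn2] using Nat.dvd_sub hpn h)
    omega
  refine h3 1 h1 1 h1 _ (natCast_mem_of_not_dvd hp hodd hn h1 hS h3 _ hn2') ⟨1, ?_⟩
  push_cast [hn2]
  ring

theorem exists_add_add_add_dvd_of_eq_two_pow {k : ℕ} (hn : n = 2 ^ k) (h1 : (1 : ℤ) ∈ S)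
    (hS : ∀ m : ℕ, m.Coprime n → (m : ℤ) ∈ S ∨ -(m : ℤ) ∈ S) :
    ∃ a ∈ S, ∃ b ∈ S, ∃ c ∈ S, ∃ d ∈ S, (n : ℤ) ∣ a + b + c + d := by
  by_contra! h4
  have odd_mem : ∀ m : ℕ, ((2 * m + 1 : ℕ) : ℤ) ∈ S := by
    intro m
    induction m with
    | zero => exact_mod_cast h1
    | succ m ih =>
      have hco : (2 * (m + 1) + 1).Coprime n :=
        hn ▸ (Nat.coprime_two_right.2 (by simp)).pow_right k
      refine (hS _ hco).resolve_right fun h => h4 _ ih _ h _ h1 _ h1 ⟨0, ?_⟩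
      push_cast
      ring
  have hn1 : 1 ≤ n := hn ▸ Nat.one_le_two_pow
  refine h4 _ (odd_mem (n - 1)) _ (odd_mem (n - 1)) _ h1 _ h1 ⟨4, ?_⟩
  push_cast [hn1]
  ring

end ExponentSums

section ConjExponents

variable {G : Type*} [Group G]

def conjExponents (g : G) : Set ℤ := {z | IsConj g (g ^ z)}

theorem one_mem_conjExponents (g : G) : (1 : ℤ) ∈ conjExponents g := by
  simpa [conjExponents] using IsConj.refl g

theorem neg_mem_conjExponents_of_isConj_inv {g : G} {z : ℤ} (h : IsConj g⁻¹ (g ^ z)) :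
    -z ∈ conjExponents g := by
  obtain ⟨c, hc⟩ := isConj_iff.1 h
  refine isConj_iff.2 ⟨c, ?_⟩
  rw [zpow_neg, ← hc, conj_inv, inv_inv]

theorem exists_prod_conj_eq_zpow_sum (g : G) (L : List ℤ) (hL : ∀ a ∈ L, a ∈ conjExponents g) :
    ∃ l : List G, l.length = L.length ∧ (l.map fun x => x⁻¹ * g * x).prod = g ^ L.sum := by
  induction L with
  | nil => exact ⟨[], rfl, by simp⟩
  | cons a L ih =>
    obtain ⟨c, hc⟩ := isConj_iff.1 (hL a List.mem_cons_self)
    obtain ⟨l, hl, hprod⟩ := ih fun b hb => hL b (List.mem_cons_of_mem _ hb)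
    refine ⟨c⁻¹ :: l, by simp [hl], ?_⟩
    rw [List.map_cons, List.prod_cons, hprod, List.sum_cons, zpow_add, inv_inv, hc]

theorem genOrder_le_length_s7 (g : G) (L : List ℤ) (hne : L ≠ [])
    (hL : ∀ a ∈ L, a ∈ conjExponents g) (hdvd : (orderOf g : ℤ) ∣ L.sum) :
    genOrder g ≤ L.length := by
  obtain ⟨l, hl, hprod⟩ := exists_prod_conj_eq_zpow_sum g L hL
  exact Nat.sInf_le
    ⟨List.length_pos_iff.2 hne, l, hl, hprod.trans (orderOf_dvd_iff_zpow_eq_one.1 hdvd)⟩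

end ConjExponents

theorem stmt7_general {G : Type*} [Group G] (g : G) (n : ℕ) (hn : orderOf g = n)
    (hsemi : ∀ m : ℕ, Nat.Coprime m n → IsConj g (g ^ m) ∨ IsConj g⁻¹ (g ^ m)) :
    (∀ p k : ℕ, p.Prime → Odd p → n = p ^ k → genOrder g ≤ 3) ∧
    (∀ k : ℕ, n = 2 ^ k → genOrder g ≤ 4) := by
  subst hn
  have h1 := one_mem_conjExponents g
  have hS (m : ℕ) (hm : m.Coprime (orderOf g)) :
      (m : ℤ) ∈ conjExponents g ∨ -(m : ℤ) ∈ conjExponents g :=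
    (hsemi m hm).imp (fun h => show IsConj g (g ^ (m : ℤ)) by rwa [zpow_natCast])
      fun h => neg_mem_conjExponents_of_isConj_inv (by rwa [zpow_natCast])
  refine ⟨fun p k hp hodd hn => ?_, fun k hn => ?_⟩
  · obtain ⟨a, ha, b, hb, c, hc, hdvd⟩ := exists_add_add_dvd_of_eq_odd_prime_pow hp hodd hn h1 hS
    simpa using genOrder_le_length_s7 g [a, b, c] (by simp) (by simp [ha, hb, hc])
      (by simpa [add_assoc] using hdvd)
  · obtain ⟨a, ha, b, hb, c, hc, d, hd, hdvd⟩ := exists_add_add_add_dvd_of_eq_two_pow hn h1 hS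
    simpa using genOrder_le_length_s7 g [a, b, c, d] (by simp) (by simp [ha, hb, hc, hd])
      (by simpa [add_assoc] using hdvd)

theorem stmt7 {G : Type*} [Group G] [Finite G] (g : G) (n : ℕ) (hn : orderOf g = n)
    (hsemi : ∀ m : ℕ, Nat.Coprime m n → IsConj g (g ^ m) ∨ IsConj g⁻¹ (g ^ m)) :
    (∀ p k : ℕ, p.Prime → Odd p → n = p ^ k → genOrder g ≤ 3) ∧
    (∀ k : ℕ, n = 2 ^ k → genOrder g ≤ 4) :=
  stmt7_general g n hn hsemi
end

section
/- In H = SL₂(F_q) with q odd, for every nontrivial unipotent element u ∈ H there exist three H-conjugates of u whose product equals −I (minus the identity matrix). -/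
/-!
A nontrivial unipotent `u ∈ SL₂(F)` has trace `2` (Cayley–Hamilton), hence is conjugate to a
transvection `T = [[1, t], [0, 1]]` with `t ≠ 0`. With `k = 2 / t`, conjugating `T` by
`[[0, -k⁻¹], [k, 0]]` gives `L = [[1, 0], [-4 / t, 1]]`, and conjugating `T` by
`[[1, 0], [k, 1]]` gives `M = [[-1, t], [-4 / t, 3]]`; a direct computation shows `T * L * M = -1`.
Inverting `2` is where the odd order of `F` enters.
-/

open Matrix
open scoped MatrixGroups

namespace Matrix.SpecialLinearGroup

section CommRing

variable {R : Type*} [CommRing R]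

def upperUnipotent (t : R) : SL(2, R) := ⟨!![1, t; 0, 1], by simp [det_fin_two_of]⟩

def lowerUnipotent (s : R) : SL(2, R) := ⟨!![1, 0; s, 1], by simp [det_fin_two_of]⟩

@[simp]
lemma coe_upperUnipotent (t : R) :
    (upperUnipotent t : Matrix (Fin 2) (Fin 2) R) = !![1, t; 0, 1] :=
  rfl

@[simp]
lemma coe_lowerUnipotent (s : R) :
    (lowerUnipotent s : Matrix (Fin 2) (Fin 2) R) = !![1, 0; s, 1] :=
  rfl

lemma isConj_of_semiconjBy {n : Type*} [Fintype n] [DecidableEq n] {A B : SpecialLinearGroup n R}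
    {P : Matrix n n R} (hP : P.det = 1) (h : SemiconjBy P A B) : IsConj A B :=
  isConj_iff.2 ⟨⟨P, hP⟩, mul_inv_eq_of_eq_mul (Subtype.ext h)⟩

lemma lowerUnipotent_inv (s : R) : (lowerUnipotent s)⁻¹ = lowerUnipotent (-s) := by
  ext i j; fin_cases i <;> fin_cases j <;> simp [coe_inv, adjugate_fin_two]

lemma upperUnipotent_mul_lowerUnipotent_mul_conj_eq_neg_one (t k : R) (htk : t * k = 2) :
    ((upperUnipotent t * lowerUnipotent (-(k ^ 2 * t)) *
      (lowerUnipotent k * upperUnipotent t * (lowerUnipotent k)⁻¹) : SL(2, R)) :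
        Matrix (Fin 2) (Fin 2) R) = -1 := by
  rw [lowerUnipotent_inv]
  ext i j
  fin_cases i <;> fin_cases j <;> simp [mul_apply, Fin.sum_univ_two] <;> grind

end CommRing

section Field

variable {F : Type*} [Field F]

lemma isConj_upperUnipotent_lowerUnipotent (t : F) {k : F} (hk : k ≠ 0) :
    IsConj (upperUnipotent t) (lowerUnipotent (-(k ^ 2 * t))) := by
  refine isConj_of_semiconjBy (P := !![0, -k⁻¹; k, 0]) (by simp [det_fin_two_of, hk]) ?_
  ext i j
  fin_cases i <;> fin_cases j <;>
    simp [mul_apply, Fin.sum_univ_two, sq, mul_assoc, mul_left_comm k, hk]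

lemma isConj_upperUnipotent_of_trace_eq_two (u : SL(2, F))
    (htr : trace (u : Matrix (Fin 2) (Fin 2) F) = 2) (hc : u 1 0 ≠ 0) :
    IsConj u (upperUnipotent (-(u 1 0)⁻¹)) := by
  have hdet : u 0 0 * u 1 1 - u 0 1 * u 1 0 = 1 := (det_fin_two _).symm.trans u.2
  rw [trace_fin_two] at htr
  refine isConj_of_semiconjBy (P := !![0, -(u 1 0)⁻¹; u 1 0, 1 - u 0 0])
    (by simp [det_fin_two_of, hc]) ?_
  ext i j
  fin_cases i <;> fin_cases j <;> simp [mul_apply, Fin.sum_univ_two] <;> field_simp <;> grind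

lemma trace_eq_two_of_sub_one_sq_eq_zero (u : SL(2, F))
    (hu : ((u : Matrix (Fin 2) (Fin 2) F) - 1) ^ 2 = 0) :
    trace (u : Matrix (Fin 2) (Fin 2) F) = 2 := by
  set A : Matrix (Fin 2) (Fin 2) F := ↑u
  have hdet : A.det = 1 := u.2
  have hCH := aeval_self_charpoly A
  simp only [charpoly_fin_two, map_add, map_sub, map_mul, map_pow, Polynomial.aeval_X,
    Polynomial.aeval_C, hdet, map_one] at hCH
  have hsmul : (trace A - 2) • A = 0 := by
    rw [← hu, ← sub_zero ((A - 1) ^ 2), ← hCH, Algebra.algebraMap_eq_smul_one, sub_smul]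
    noncomm_ring
    module
  have hA : A ≠ 0 := fun h => by simp [h] at hdet
  exact sub_eq_zero.1 ((smul_eq_zero.1 hsmul).resolve_right hA)

lemma exists_isConj_upperUnipotent_of_trace_eq_two (u : SL(2, F))
    (htr : trace (u : Matrix (Fin 2) (Fin 2) F) = 2) (hu1 : u ≠ 1) :
    ∃ t ≠ 0, IsConj u (upperUnipotent t) := by
  by_cases hc : u 1 0 = 0
  · have hdet : u 0 0 * u 1 1 - u 0 1 * u 1 0 = 1 := (det_fin_two _).symm.trans u.2
    rw [trace_fin_two] at htr
    have ha : u 0 0 = 1 := by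
      have : (u 0 0 - 1) ^ 2 = 0 := by linear_combination u 0 0 * htr - hdet - u 0 1 * hc
      exact sub_eq_zero.1 (pow_eq_zero_iff two_ne_zero |>.1 this)
    have hd : u 1 1 = 1 := by linear_combination htr - ha
    have hu : u = upperUnipotent (u 0 1) := by
      ext i j; fin_cases i <;> fin_cases j <;> simp [ha, hc, hd]
    refine ⟨u 0 1, fun hb => hu1 ?_, hu ▸ IsConj.refl _⟩
    rw [hu, hb]
    ext i j; fin_cases i <;> fin_cases j <;> rfl
  · exact ⟨_, neg_ne_zero.2 (inv_ne_zero hc), isConj_upperUnipotent_of_trace_eq_two u htr hc⟩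

end Field

end Matrix.SpecialLinearGroup

open Matrix.SpecialLinearGroup

theorem stmt9 {F : Type*} [Field F] [Fintype F] (hq : Odd (Fintype.card F))
    (u : Matrix.SpecialLinearGroup (Fin 2) F)
    (hu : ((u : Matrix (Fin 2) (Fin 2) F) - 1) ^ 2 = 0) (hu1 : u ≠ 1) :
    ∃ a b c : Matrix.SpecialLinearGroup (Fin 2) F,
      IsConj u a ∧ IsConj u b ∧ IsConj u c ∧
      ((a * b * c : Matrix.SpecialLinearGroup (Fin 2) F) : Matrix (Fin 2) (Fin 2) F) = -1 := by
  have h2 : (2 : F) ≠ 0 := Ring.two_ne_zero fun h => by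
    have := FiniteField.even_card_of_char_two h
    rw [Nat.odd_iff] at hq
    omega
  obtain ⟨t, ht, hut⟩ := exists_isConj_upperUnipotent_of_trace_eq_two u
    (trace_eq_two_of_sub_one_sq_eq_zero u hu) hu1
  exact ⟨_, _, _, hut, hut.trans (isConj_upperUnipotent_lowerUnipotent t (div_ne_zero h2 ht)),
    hut.trans (isConj_iff.2 ⟨lowerUnipotent (2 / t), rfl⟩),
    upperUnipotent_mul_lowerUnipotent_mul_conj_eq_neg_one t (2 / t) (mul_div_cancel₀ 2 ht)⟩
end

section
/- Let G = ⟨s⟩ be a finite cyclic group and let φ, τ be two finite-dimensional irreducible representations of G over a finite field F. If the matrices φ(s) and τ(s) have an eigenvalue in common (in an algebraic closure of F), then φ and τ are equivalent, i.e. the corresponding F[G]-modules are isomorphic. -/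
/-!
Since `G` is generated by `s`, a subspace is `G`-stable iff it is stable under `A = φ s`, so `V`,
viewed as an `F[X]`-module through `A`, is simple, hence isomorphic to `F[X] ⧸ (p)` with
`p = minpoly F A` irreducible; comparing dimensions gives `charpoly A = p`. A common root `μ` of
the characteristic polynomials then forces both minimal polynomials to equal `minpoly F μ`, so the
`F[X]`-modules attached to `φ s` and `τ s` are isomorphic, and such an isomorphism intertwines
`φ (s ^ n)` with `τ (s ^ n)`.
-/

open Polynomial Module

theorem IsSimpleModule.nonempty_linearEquiv_quotient_annihilator {R M : Type*} [CommRing R]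
    [AddCommGroup M] [Module R M] [IsSimpleModule R M] :
    Nonempty (M ≃ₗ[R] R ⧸ Module.annihilator R M) := by
  obtain ⟨I, -, ⟨e⟩⟩ := isSimpleModule_iff_quot_maximal.mp ‹IsSimpleModule R M›
  rw [e.annihilator_eq, Ideal.annihilator_quotient]
  exact ⟨e⟩

theorem Module.AEval'.exists_linearEquiv_pow_apply {R V W : Type*} [CommRing R]
    [AddCommGroup V] [Module R V] [AddCommGroup W] [Module R W] {A : End R V} {B : End R W}
    (ψ : AEval' A ≃ₗ[R[X]] AEval' B) :
    ∃ e : V ≃ₗ[R] W, ∀ (n : ℕ) (v : V), e ((A ^ n) v) = (B ^ n) (e v) := by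
  refine ⟨(AEval'.of A).trans ((ψ.restrictScalars R).trans (AEval'.of B).symm), fun n v => ?_⟩
  simp only [LinearEquiv.trans_apply, LinearEquiv.restrictScalars_apply, ← End.smul_def,
    ← AEval.X_pow_smul_of, map_smul, AEval.of_symm_smul, aeval_X_pow]

namespace Module.End

variable {K V : Type*} [Field K] [AddCommGroup V] [Module K V] [Nontrivial V] (A : End K V)
  (hA : ∀ p : Submodule K V, (∀ v ∈ p, A v ∈ p) → p = ⊥ ∨ p = ⊤)
include hA

theorem isSimpleModule_aeval'_of_forall_invariant : IsSimpleModule K[X] (AEval' A) := by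
  have : Nontrivial (AEval' A) := (AEval'.of A).symm.toEquiv.nontrivial
  refine { eq_bot_or_eq_top := fun q => ?_ }
  let p : Submodule K V := (q.restrictScalars K).comap (AEval'.of A).toLinearMap
  have hp : ∀ v ∈ p, A v ∈ p := fun v hv => by
    have := q.smul_mem (X : K[X]) (show AEval'.of A v ∈ q from hv)
    rwa [AEval.X_smul_of] at this
  rcases hA p hp with h | h
  · refine Or.inl (eq_bot_iff.mpr fun m hm => ?_)
    have : (AEval'.of A).symm m ∈ p := by simpa [p] using hm
    simpa [h] using this
  · refine Or.inr (eq_top_iff.mpr fun m _ => ?_)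
    have : (AEval'.of A).symm m ∈ p := by simp [h]
    simpa [p] using this

theorem nonempty_aeval'_equiv_quotient_minpoly_of_forall_invariant :
    Nonempty (AEval' A ≃ₗ[K[X]] K[X] ⧸ Ideal.span {minpoly K A}) := by
  have := isSimpleModule_aeval'_of_forall_invariant A hA
  rw [span_minpoly_eq_annihilator]
  exact IsSimpleModule.nonempty_linearEquiv_quotient_annihilator

variable [FiniteDimensional K V]

theorem irreducible_minpoly_of_forall_invariant : Irreducible (minpoly K A) := by
  have := isSimpleModule_aeval'_of_forall_invariant A hA
  rw [Ideal.irreducible_iff_isMaximal_span_singleton (minpoly.ne_zero (LinearMap.isIntegral A))]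
  change (Ideal.span {minpoly K A}).IsMaximal
  rw [span_minpoly_eq_annihilator]
  exact IsSimpleModule.annihilator_isMaximal

theorem charpoly_eq_minpoly_of_forall_invariant : A.charpoly = minpoly K A := by
  obtain ⟨e⟩ := nonempty_aeval'_equiv_quotient_minpoly_of_forall_invariant A hA
  have hdim : finrank K V = (minpoly K A).natDegree := by
    rw [← finrank_quotient_span_eq_natDegree]
    exact ((AEval'.of A).trans (e.restrictScalars K)).finrank_eq
  exact eq_of_monic_of_dvd_of_natDegree_le (minpoly.monic (LinearMap.isIntegral A))
    A.charpoly_monic A.minpoly_dvd_charpoly (by rw [LinearMap.charpoly_natDegree, hdim])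

theorem minpoly_eq_minpoly_of_aeval_charpoly_eq_zero {L : Type*} [Ring L] [Nontrivial L]
    [Algebra K L] {μ : L} (hμ : aeval μ A.charpoly = 0) : minpoly K A = minpoly K μ :=
  minpoly.eq_of_irreducible_of_monic (irreducible_minpoly_of_forall_invariant A hA)
    (charpoly_eq_minpoly_of_forall_invariant A hA ▸ hμ) (minpoly.monic (LinearMap.isIntegral A))

end Module.End

theorem Representation.apply_mem_of_apply_generator_mem {K G V : Type*} [Field K] [Group G]
    [Finite G] [AddCommGroup V] [Module K V] (ρ : Representation K G V) {s : G}
    (hs : ∀ g : G, g ∈ Subgroup.zpowers s) {p : Submodule K V} (hp : ∀ v ∈ p, ρ s v ∈ p)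
    (g : G) : ∀ v ∈ p, ρ g v ∈ p := by
  obtain ⟨n, rfl⟩ := mem_powers_iff_mem_zpowers.mpr (hs g)
  rw [map_pow, End.coe_pow]
  exact Set.MapsTo.iterate hp n

theorem stmt11_general {F : Type*} [Field F]
    {G : Type*} [Group G] [Fintype G] (s : G)
    (hs : ∀ g : G, g ∈ Subgroup.zpowers s)
    {V W : Type*} [AddCommGroup V] [Module F V] [AddCommGroup W] [Module F W]
    [FiniteDimensional F V] [FiniteDimensional F W] [Nontrivial V] [Nontrivial W]
    (φ : Representation F G V) (τ : Representation F G W)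
    (hφirr : ∀ p : Submodule F V, (∀ (g : G), ∀ v ∈ p, φ g v ∈ p) → p = ⊥ ∨ p = ⊤)
    (hτirr : ∀ p : Submodule F W, (∀ (g : G), ∀ w ∈ p, τ g w ∈ p) → p = ⊥ ∨ p = ⊤)
    (hcommon : ∃ μ : AlgebraicClosure F,
      Polynomial.aeval μ (LinearMap.charpoly (φ s)) = 0 ∧
      Polynomial.aeval μ (LinearMap.charpoly (τ s)) = 0) :
    ∃ e : V ≃ₗ[F] W, ∀ (g : G) (v : V), e (φ g v) = τ g (e v) := by
  have hA : ∀ p : Submodule F V, (∀ v ∈ p, φ s v ∈ p) → p = ⊥ ∨ p = ⊤ :=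
    fun p hp => hφirr p (φ.apply_mem_of_apply_generator_mem hs hp)
  have hB : ∀ p : Submodule F W, (∀ w ∈ p, τ s w ∈ p) → p = ⊥ ∨ p = ⊤ :=
    fun p hp => hτirr p (τ.apply_mem_of_apply_generator_mem hs hp)
  obtain ⟨μ, hμA, hμB⟩ := hcommon
  have hmin : minpoly F (φ s) = minpoly F (τ s) :=
    (End.minpoly_eq_minpoly_of_aeval_charpoly_eq_zero _ hA hμA).trans
      (End.minpoly_eq_minpoly_of_aeval_charpoly_eq_zero _ hB hμB).symm
  obtain ⟨eA⟩ := End.nonempty_aeval'_equiv_quotient_minpoly_of_forall_invariant _ hA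
  obtain ⟨eB⟩ := End.nonempty_aeval'_equiv_quotient_minpoly_of_forall_invariant _ hB
  rw [hmin] at eA
  obtain ⟨e, he⟩ := AEval'.exists_linearEquiv_pow_apply (eA.trans eB.symm)
  refine ⟨e, fun g v => ?_⟩
  obtain ⟨n, rfl⟩ := mem_powers_iff_mem_zpowers.mpr (hs g)
  simpa only [map_pow] using he n v

theorem stmt11 {F : Type*} [Field F] [Fintype F]
    {G : Type*} [Group G] [Fintype G] (s : G)
    (hs : ∀ g : G, g ∈ Subgroup.zpowers s)
    {V W : Type*} [AddCommGroup V] [Module F V] [AddCommGroup W] [Module F W]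
    [FiniteDimensional F V] [FiniteDimensional F W] [Nontrivial V] [Nontrivial W]
    (φ : Representation F G V) (τ : Representation F G W)
    (hφirr : ∀ p : Submodule F V, (∀ (g : G), ∀ v ∈ p, φ g v ∈ p) → p = ⊥ ∨ p = ⊤)
    (hτirr : ∀ p : Submodule F W, (∀ (g : G), ∀ w ∈ p, τ g w ∈ p) → p = ⊥ ∨ p = ⊤)
    (hcommon : ∃ μ : AlgebraicClosure F,
      Polynomial.aeval μ (LinearMap.charpoly (φ s)) = 0 ∧
      Polynomial.aeval μ (LinearMap.charpoly (τ s)) = 0) :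
    ∃ e : V ≃ₗ[F] W, ∀ (g : G) (v : V), e (φ g v) = τ g (e v) :=
  stmt11_general s hs φ τ hφirr hτirr hcommon
end

section
/- Let F be an algebraically closed field and let A, B ∈ GL_n(F) be diagonalizable matrices each with exactly two distinct eigenvalues. Then every composition factor of the subgroup X = ⟨A, B⟩ acting on V = F^n has dimension 1 or 2. -/
/-!
On the composition factor `W = q / p`, the operators `a`, `b` induced by `A`, `B` satisfy
quadratic relations `a² = s a + t`, `b² = s' b + t'`. Then `c = a b + b a - s b - s' a` commutes
with `a` and `b`, so by Schur's lemma it is a scalar `μ`. For an eigenvector `v` of `a`, the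
identity `a (b v) = μ v - b (a v) + s b v + s' a v` and the relation for `b` show that
`span {v, b v}` is invariant, hence all of `W`, so `dim W ≤ 2`.
-/

open Module Submodule

section Quadratic

variable {K R : Type*} [CommRing K] [Ring R] [Algebra K R]

theorem commute_mul_add_mul_sub_smul {a : R} {s t : K} (ha : a * a = s • a + t • 1) (b : R) :
    Commute a (a * b + b * a - s • b) := by
  have hab : a * (a * b) = s • (a * b) + t • b := by
    rw [← mul_assoc, ha, add_mul, smul_mul_assoc, smul_mul_assoc, one_mul]
  have hba : b * a * a = s • (b * a) + t • b := by
    rw [mul_assoc, ha, mul_add, mul_smul_comm, mul_smul_comm, mul_one]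
  simp only [Commute, SemiconjBy, mul_add, add_mul, mul_sub, sub_mul, mul_smul_comm,
    smul_mul_assoc, hab, hba, ← mul_assoc]
  abel

end Quadratic

section Irreducible

variable {F V : Type*} [Field F] [AddCommGroup V] [Module F V]

def IsIrreduciblePair (a b : End F V) : Prop :=
  ∀ U : Submodule F V, U ∈ a.invtSubmodule → U ∈ b.invtSubmodule → U = ⊥ ∨ U = ⊤

namespace IsIrreduciblePair

variable [IsAlgClosed F] [FiniteDimensional F V] {a b : End F V} (h : IsIrreduciblePair a b)
include h

theorem exists_eq_smul_one_of_commute [Nontrivial V] {c : End F V} (ha : Commute c a)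
    (hb : Commute c b) : ∃ μ : F, c = μ • 1 := by
  obtain ⟨μ, hμ⟩ := End.exists_eigenvalue c
  have htop : c.eigenspace μ = ⊤ :=
    (h _ (End.mapsTo_genEigenspace_of_comm ha μ 1)
      (End.mapsTo_genEigenspace_of_comm hb μ 1)).resolve_left hμ
  refine ⟨μ, LinearMap.ext fun v => ?_⟩
  exact End.mem_eigenspace_iff.mp (htop ▸ mem_top)

theorem finrank_le_two {s t s' t' : F} (ha : a * a = s • a + t • 1)
    (hb : b * b = s' • b + t' • 1) : finrank F V ≤ 2 := by
  rcases subsingleton_or_nontrivial V with hV | hV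
  · simp [finrank_zero_of_subsingleton]
  obtain ⟨μ, hμ⟩ := h.exists_eq_smul_one_of_commute (c := a * b + b * a - s • b - s' • a)
    (((commute_mul_add_mul_sub_smul ha b).sub_right ((Commute.refl a).smul_right s')).symm)
    (by
      have := (commute_mul_add_mul_sub_smul hb a).sub_right ((Commute.refl b).smul_right s)
      rw [add_comm, sub_right_comm] at this
      exact this.symm)
  obtain ⟨e, he⟩ := End.exists_eigenvalue a
  obtain ⟨v, hv⟩ := he.exists_hasEigenvector
  have hav : a v = e • v := hv.apply_eq_smul
  have habv : a (b v) = (μ + s' * e) • v + (s - e) • b v := by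
    have := congr($hμ v)
    simp only [LinearMap.sub_apply, LinearMap.add_apply, LinearMap.smul_apply, End.mul_apply,
      End.one_apply, hav, map_smul] at this
    rw [add_smul, sub_smul, mul_smul]
    linear_combination (norm := module) this
  have hbbv : b (b v) = s' • b v + t' • v := by
    simpa using congr($hb v)
  have hv_mem : v ∈ span F {v, b v} := subset_span (by simp)
  have hbv_mem : b v ∈ span F {v, b v} := subset_span (by simp)
  have hU : span F {v, b v} = ⊤ := by
    refine (h _ ?_ ?_).resolve_left ?_
    · rw [End.mem_invtSubmodule, span_le, Set.pair_subset_iff, SetLike.mem_coe, SetLike.mem_coe,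
        mem_comap, mem_comap, hav, habv]
      exact ⟨smul_mem _ _ hv_mem, add_mem (smul_mem _ _ hv_mem) (smul_mem _ _ hbv_mem)⟩
    · rw [End.mem_invtSubmodule, span_le, Set.pair_subset_iff, SetLike.mem_coe, SetLike.mem_coe,
        mem_comap, mem_comap, hbbv]
      exact ⟨hbv_mem, add_mem (smul_mem _ _ hbv_mem) (smul_mem _ _ hv_mem)⟩
    · exact (Submodule.ne_bot_iff _).mpr ⟨v, hv_mem, hv.2⟩
  calc finrank F V = finrank F (span F {v, b v}) := by rw [hU, finrank_top]
    _ ≤ 2 := by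
      classical
      have := finrank_span_finset_le_card (R := F) ({v, b v} : Finset V)
      rw [Finset.coe_pair] at this
      exact this.trans Finset.card_le_two

end IsIrreduciblePair

section Subquotient

variable {p q : Submodule F V}

def subquotientEnd (f : End F V) (hp : p ∈ f.invtSubmodule) (hq : q ∈ f.invtSubmodule) :
    End F (q ⧸ p.comap q.subtype) :=
  (p.comap q.subtype).mapQ _ (f.restrict hq) fun _ hx => hp hx

@[simp]
theorem subquotientEnd_mk (f : End F V) (hp : p ∈ f.invtSubmodule) (hq : q ∈ f.invtSubmodule)
    (x : q) :
    subquotientEnd f hp hq (Submodule.Quotient.mk x) = Submodule.Quotient.mk (f.restrict hq x) :=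
  rfl

theorem subquotientEnd_mul_self {f : End F V} (hp : p ∈ f.invtSubmodule)
    (hq : q ∈ f.invtSubmodule) {s t : F} (hf : f * f = s • f + t • 1) :
    subquotientEnd f hp hq * subquotientEnd f hp hq =
      s • subquotientEnd f hp hq + t • 1 := by
  ext x
  have hx : f.restrict hq (f.restrict hq x) = s • f.restrict hq x + t • x :=
    Subtype.ext congr($hf x)
  simp [hx]

theorem map_comap_mkQ_mem_invtSubmodule {f : End F V} (hp : p ∈ f.invtSubmodule)
    (hq : q ∈ f.invtSubmodule) {U : Submodule F (q ⧸ p.comap q.subtype)}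
    (hU : U ∈ (subquotientEnd f hp hq).invtSubmodule) :
    (U.comap (mkQ _)).map q.subtype ∈ f.invtSubmodule := by
  rintro - ⟨x, hx, rfl⟩
  exact ⟨f.restrict hq x, hU hx, rfl⟩

theorem isIrreduciblePair_subquotientEnd {a b : End F V} (hpq : p ≤ q)
    (hpa : p ∈ a.invtSubmodule) (hqa : q ∈ a.invtSubmodule)
    (hpb : p ∈ b.invtSubmodule) (hqb : q ∈ b.invtSubmodule)
    (hsimple : ∀ r : Submodule F V, r ∈ a.invtSubmodule → r ∈ b.invtSubmodule →
      p ≤ r → r ≤ q → r = p ∨ r = q) :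
    IsIrreduciblePair (subquotientEnd a hpa hqa) (subquotientEnd b hpb hqb) := by
  intro U hUa hUb
  have hinj := map_injective_of_injective q.injective_subtype
  have hp_eq : (p.comap q.subtype).map q.subtype = p := by
    rw [map_comap_subtype, inf_eq_right.mpr hpq]
  have hle : p.comap q.subtype ≤ U.comap (mkQ _) := fun x hx => by
    rw [mem_comap, mkQ_apply, (Quotient.mk_eq_zero _).mpr hx]
    exact U.zero_mem
  refine (hsimple _ (map_comap_mkQ_mem_invtSubmodule hpa hqa hUa)
    (map_comap_mkQ_mem_invtSubmodule hpb hqb hUb) ?_ ?_).imp (fun h => ?_) (fun h => ?_)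
  · exact hp_eq.symm.le.trans (map_mono hle)
  · exact map_subtype_le _ _
  · have : U.comap (mkQ _) = p.comap q.subtype := hinj (h.trans hp_eq.symm)
    rw [← map_comap_eq_of_surjective (mkQ_surjective _) U, this, mkQ_map_self]
  · have : U.comap (mkQ _) = ⊤ := hinj (h.trans (map_subtype_top q).symm)
    rw [← map_comap_eq_of_surjective (mkQ_surjective _) U, this, Submodule.map_top, range_mkQ]

end Subquotient

theorem finrank_le_finrank_add_two_of_irreducible_subquotient [IsAlgClosed F]
    [FiniteDimensional F V] {a b : End F V} {s t s' t' : F} (ha : a * a = s • a + t • 1)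
    (hb : b * b = s' • b + t' • 1) {p q : Submodule F V} (hpq : p ≤ q)
    (hpa : p ∈ a.invtSubmodule) (hqa : q ∈ a.invtSubmodule)
    (hpb : p ∈ b.invtSubmodule) (hqb : q ∈ b.invtSubmodule)
    (hsimple : ∀ r : Submodule F V, r ∈ a.invtSubmodule → r ∈ b.invtSubmodule →
      p ≤ r → r ≤ q → r = p ∨ r = q) :
    finrank F q ≤ finrank F p + 2 := by
  have hW := (isIrreduciblePair_subquotientEnd hpq hpa hqa hpb hqb hsimple).finrank_le_two
    (subquotientEnd_mul_self hpa hqa ha) (subquotientEnd_mul_self hpb hqb hb)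
  have hdim := finrank_quotient_add_finrank (p.comap q.subtype)
  rw [LinearEquiv.finrank_eq (comapSubtypeEquivOfLe hpq)] at hdim
  omega

end Irreducible

namespace Matrix

variable {n R : Type*} [Fintype n] [DecidableEq n]

theorem diagonal_mul_self_eq_of_two_values [CommRing R] {d : n → R} {α β : R}
    (hd : ∀ i, d i = α ∨ d i = β) :
    diagonal d * diagonal d = (α + β) • diagonal d + (-(α * β)) • 1 := by
  ext i j
  rcases eq_or_ne i j with rfl | hij
  · rcases hd i with h | h <;> simp [h] <;> ring
  · simp [diagonal_apply_ne _ hij, one_apply_ne hij]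

theorem exists_mul_self_eq_of_conj_diagonal [CommRing R] {A P : Matrix n n R} {d : n → R}
    (hP : IsUnit P.det) (hA : A = P * diagonal d * P⁻¹) (hd : (Set.range d).ncard = 2) :
    ∃ s t : R, A * A = s • A + t • 1 := by
  obtain ⟨α, β, -, hrange⟩ := Set.ncard_eq_two.mp hd
  have hD := diagonal_mul_self_eq_of_two_values (d := d) (α := α) (β := β) fun i => by
    simpa [hrange] using Set.mem_range_self (f := d) i
  refine ⟨α + β, -(α * β), ?_⟩
  subst hA
  calc P * diagonal d * P⁻¹ * (P * diagonal d * P⁻¹)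
      = P * (diagonal d * diagonal d) * P⁻¹ := by
        simp only [Matrix.mul_assoc, nonsing_inv_mul_cancel_left _ _ hP]
    _ = _ := by
        rw [hD]
        simp [Matrix.mul_add, Matrix.add_mul, mul_nonsing_inv _ hP, Matrix.mul_assoc]

end Matrix

theorem stmt12_general {F : Type*} [Field F] [IsAlgClosed F] {n : ℕ}
    (A B : Matrix (Fin n) (Fin n) F)
    (hA : ∃ (P : Matrix (Fin n) (Fin n) F) (d : Fin n → F), IsUnit P.det ∧
      A = P * Matrix.diagonal d * P⁻¹ ∧ (Set.range d).ncard = 2)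
    (hB : ∃ (P : Matrix (Fin n) (Fin n) F) (d : Fin n → F), IsUnit P.det ∧
      B = P * Matrix.diagonal d * P⁻¹ ∧ (Set.range d).ncard = 2)
    (p q : Submodule F (Fin n → F)) (hpq : p ≤ q) (hne : p ≠ q)
    (hpA : ∀ v ∈ p, A.mulVec v ∈ p) (hpB : ∀ v ∈ p, B.mulVec v ∈ p)
    (hqA : ∀ v ∈ q, A.mulVec v ∈ q) (hqB : ∀ v ∈ q, B.mulVec v ∈ q)
    (hsimple : ∀ r : Submodule F (Fin n → F),
      (∀ v ∈ r, A.mulVec v ∈ r) → (∀ v ∈ r, B.mulVec v ∈ r) →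
      p ≤ r → r ≤ q → r = p ∨ r = q) :
    Module.finrank F q = Module.finrank F p + 1 ∨
    Module.finrank F q = Module.finrank F p + 2 := by
  obtain ⟨P, d, hP, hAd, hd⟩ := hA
  obtain ⟨P', d', hP', hBd, hd'⟩ := hB
  obtain ⟨s, t, hAA⟩ := Matrix.exists_mul_self_eq_of_conj_diagonal hP hAd hd
  obtain ⟨s', t', hBB⟩ := Matrix.exists_mul_self_eq_of_conj_diagonal hP' hBd hd'
  have hlt : finrank F p < finrank F q :=
    Submodule.finrank_lt_finrank_of_lt (lt_of_le_of_ne hpq hne)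
  have hle := finrank_le_finrank_add_two_of_irreducible_subquotient
    (a := Matrix.toLinAlgEquiv' A) (b := Matrix.toLinAlgEquiv' B)
    (by simpa using congr(Matrix.toLinAlgEquiv' $hAA))
    (by simpa using congr(Matrix.toLinAlgEquiv' $hBB))
    hpq hpA hqA hpB hqB hsimple
  omega

theorem stmt12 {F : Type*} [Field F] [IsAlgClosed F] {n : ℕ}
    (A B : Matrix (Fin n) (Fin n) F) (hAdet : IsUnit A.det) (hBdet : IsUnit B.det)
    (hA : ∃ (P : Matrix (Fin n) (Fin n) F) (d : Fin n → F), IsUnit P.det ∧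
      A = P * Matrix.diagonal d * P⁻¹ ∧ (Set.range d).ncard = 2)
    (hB : ∃ (P : Matrix (Fin n) (Fin n) F) (d : Fin n → F), IsUnit P.det ∧
      B = P * Matrix.diagonal d * P⁻¹ ∧ (Set.range d).ncard = 2)
    (p q : Submodule F (Fin n → F)) (hpq : p ≤ q) (hne : p ≠ q)
    (hpA : ∀ v ∈ p, A.mulVec v ∈ p) (hpB : ∀ v ∈ p, B.mulVec v ∈ p)
    (hqA : ∀ v ∈ q, A.mulVec v ∈ q) (hqB : ∀ v ∈ q, B.mulVec v ∈ q)
    (hsimple : ∀ r : Submodule F (Fin n → F),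
      (∀ v ∈ r, A.mulVec v ∈ r) → (∀ v ∈ r, B.mulVec v ∈ r) →
      p ≤ r → r ≤ q → r = p ∨ r = q) :
    Module.finrank F q = Module.finrank F p + 1 ∨
    Module.finrank F q = Module.finrank F p + 2 :=
  stmt12_general A B hA hB p q hpq hne hpA hpB hqA hqB hsimple
end

section
/- Let n ≥ 2, F a field, H = SL_n(F), μ ∈ F^×, and g = diag(μ^{1−n}, μ, …, μ) ∈ H. Suppose l ∈ {1,…,n−1} and there exist x₁,…,x_l ∈ GL_n(F) and λ ∈ F with g^{x₁} ⋯ g^{x_l} = λ·I. Then μ^{ln} = 1. -/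
/-!
Each conjugate `g^x` differs from the scalar `μ • 1` by a matrix of rank at most one, so by
telescoping a product of `l` conjugates differs from `μ ^ l • 1` by a matrix of rank at most
`l < n`. If that product is the scalar `λ • 1`, then `(λ - μ ^ l) • 1` is singular, hence
`λ = μ ^ l`; taking determinants, `1 = det g ^ l = λ ^ n = μ ^ (l n)`.
-/

open Matrix

namespace Matrix

variable {m n K : Type*} [Field K]

theorem rank_add_le [Fintype n] (A B : Matrix m n K) : (A + B).rank ≤ A.rank + B.rank := by
  have hrange : LinearMap.range (A + B).mulVecLin ≤
      LinearMap.range A.mulVecLin ⊔ LinearMap.range B.mulVecLin := by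
    rintro x ⟨v, rfl⟩
    rw [mulVecLin_add]
    exact Submodule.add_mem_sup ⟨v, rfl⟩ ⟨v, rfl⟩
  exact (Submodule.finrank_mono hrange).trans (Submodule.finrank_add_le_finrank_add_finrank _ _)

variable [Fintype m] [DecidableEq m]

theorem rank_diagonal_sub_smul_one_le_one [DecidableEq K] {d : m → K} {c : K} (i₀ : m)
    (hd : ∀ i, i ≠ i₀ → d i = c) : (diagonal d - c • (1 : Matrix m m K)).rank ≤ 1 := by
  rw [smul_one_eq_diagonal, diagonal_sub, rank_diagonal, Fintype.card_le_one_iff]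
  have hsupp : ∀ j : {i // d i - c ≠ 0}, (j : m) = i₀ := fun ⟨j, hj⟩ =>
    by_contra fun hne => hj (sub_eq_zero.mpr (hd j hne))
  exact fun j k => Subtype.ext ((hsupp j).trans (hsupp k).symm)

theorem rank_conj_sub_smul_one {P : Matrix m m K} (hP : IsUnit P.det) (A : Matrix m m K)
    (c : K) : (P⁻¹ * A * P - c • 1).rank = (A - c • 1).rank := by
  have hconj : P⁻¹ * A * P - c • 1 = P⁻¹ * (A - c • 1) * P := by
    rw [mul_sub, sub_mul, Matrix.mul_smul, mul_one, Matrix.smul_mul, nonsing_inv_mul _ hP]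
  rw [hconj, rank_mul_eq_left_of_isUnit_det _ _ hP,
    rank_mul_eq_right_of_isUnit_det _ _ (isUnit_nonsing_inv_det P hP)]

/-- The telescoping identity `A B - c^(k+1) = A (B - c^k) + c^k (A - c)` makes the defect of
a product from the scalar `c ^ length` subadditive. -/
theorem rank_list_prod_sub_pow_smul_le (c : K) (r : ℕ) (L : List (Matrix m m K))
    (hL : ∀ A ∈ L, (A - c • 1).rank ≤ r) :
    (L.prod - c ^ L.length • (1 : Matrix m m K)).rank ≤ r * L.length := by
  induction L with
  | nil => simp
  | cons A L ih =>
    have htel : (A :: L).prod - c ^ (A :: L).length • (1 : Matrix m m K)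
        = A * (L.prod - c ^ L.length • 1) + (c ^ L.length • 1) * (A - c • 1) := by
      simp only [List.prod_cons, List.length_cons, mul_sub, smul_mul_assoc, one_mul,
        Matrix.mul_smul, mul_one, smul_smul, ← pow_succ]
      abel
    rw [htel, List.length_cons, mul_add_one]
    calc (A * (L.prod - c ^ L.length • 1) + (c ^ L.length • 1) * (A - c • 1)).rank
        ≤ (A * (L.prod - c ^ L.length • 1)).rank + ((c ^ L.length • 1) * (A - c • 1)).rank :=
          rank_add_le _ _
      _ ≤ (L.prod - c ^ L.length • 1).rank + (A - c • 1).rank :=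
          add_le_add (rank_mul_le_right _ _) (rank_mul_le_right _ _)
      _ ≤ r * L.length + r :=
          add_le_add (ih fun B hB => hL B (List.mem_cons_of_mem _ hB)) (hL A List.mem_cons_self)

theorem eq_zero_of_rank_smul_one_lt {c : K}
    (h : (c • (1 : Matrix m m K)).rank < Fintype.card m) : c = 0 := by
  by_contra hc
  have hunit : IsUnit (c • (1 : Matrix m m K)) := by
    rw [isUnit_iff_isUnit_det, det_smul, det_one, mul_one]
    exact (IsUnit.mk0 c hc).pow _
  exact h.ne (rank_of_isUnit _ hunit)

theorem det_list_prod_conj {l : ℕ} (g : Matrix m m K) (f : Fin l → Matrix m m K)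
    (hf : ∀ i, IsUnit (f i).det) :
    (List.ofFn fun i : Fin l => (f i)⁻¹ * g * f i).prod.det = g.det ^ l := by
  rw [← coe_detMonoidHom, map_list_prod, List.map_ofFn]
  simp [Function.comp_def, det_conj' ((isUnit_iff_isUnit_det _).mpr (hf _))]

end Matrix

theorem det_diagonal_units_inv_pow_first {F : Type*} [Field F] {n : ℕ} (hn : 0 < n) (μ : Fˣ) :
    (diagonal fun i : Fin n =>
      if (i : ℕ) = 0 then ((μ⁻¹ : Fˣ) : F) ^ (n - 1) else (μ : F)).det = 1 := by
  obtain ⟨m, rfl⟩ : ∃ m, n = m + 1 := ⟨n - 1, by omega⟩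
  rw [det_diagonal, Fin.prod_univ_succ]
  simp only [Fin.val_zero, Fin.val_succ, if_true, Nat.succ_ne_zero, if_false,
    Finset.prod_const, Finset.card_univ, Fintype.card_fin, Nat.add_sub_cancel, ← mul_pow,
    Units.inv_mul, one_pow]

theorem stmt13_general {F : Type*} [Field F] {n : ℕ} (μ : Fˣ)
    (g : Matrix (Fin n) (Fin n) F)
    (hg : g = Matrix.diagonal (fun i : Fin n =>
      if (i : ℕ) = 0 then ((μ⁻¹ : Fˣ) : F) ^ (n - 1) else (μ : F)))
    (l : ℕ) (hl1 : 1 ≤ l) (hl2 : l ≤ n - 1)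
    (f : Fin l → Matrix (Fin n) (Fin n) F) (hf : ∀ i, IsUnit (f i).det)
    (lam : F)
    (hprod : (List.ofFn fun i : Fin l => (f i)⁻¹ * g * f i).prod
      = lam • (1 : Matrix (Fin n) (Fin n) F)) :
    (μ : F) ^ (l * n) = 1 := by
  classical
  have hln : l < n := by omega
  have hconj : ∀ A ∈ List.ofFn (fun i : Fin l => (f i)⁻¹ * g * f i),
      (A - (μ : F) • 1).rank ≤ 1 := by
    simp only [List.forall_mem_ofFn_iff, rank_conj_sub_smul_one (hf _), hg]
    exact fun _ => rank_diagonal_sub_smul_one_le_one ⟨0, by omega⟩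
      fun i hi => if_neg fun h => hi (Fin.ext h)
  have hlam : lam = (μ : F) ^ l := by
    have hrank := rank_list_prod_sub_pow_smul_le _ _ _ hconj
    rw [hprod, List.length_ofFn, ← sub_smul, one_mul] at hrank
    exact sub_eq_zero.mp (eq_zero_of_rank_smul_one_lt (by rw [Fintype.card_fin]; omega))
  have hdet := congrArg det hprod
  rw [det_list_prod_conj g f hf, hg, det_diagonal_units_inv_pow_first (by omega), one_pow,
    det_smul, det_one, mul_one, Fintype.card_fin, hlam, ← pow_mul] at hdet
  exact hdet.symm

theorem stmt13 {F : Type*} [Field F] {n : ℕ} (hn : 2 ≤ n) (μ : Fˣ)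
    (g : Matrix (Fin n) (Fin n) F)
    (hg : g = Matrix.diagonal (fun i : Fin n =>
      if (i : ℕ) = 0 then ((μ⁻¹ : Fˣ) : F) ^ (n - 1) else (μ : F)))
    (l : ℕ) (hl1 : 1 ≤ l) (hl2 : l ≤ n - 1)
    (f : Fin l → Matrix (Fin n) (Fin n) F) (hf : ∀ i, IsUnit (f i).det)
    (lam : F)
    (hprod : (List.ofFn fun i : Fin l => (f i)⁻¹ * g * f i).prod
      = lam • (1 : Matrix (Fin n) (Fin n) F)) :
    (μ : F) ^ (l * n) = 1 :=
  stmt13_general μ g hg l hl1 hl2 f hf lam hprod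
end
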